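/- Theorem 4.5, case B4. In addition to the common setup, assume b11 = b21, σ11 = σ21, b12 = b22, σ12 = σ22, and K₁ := K_{11} = K_{21} > K_{12} = K_{22} =: K₂; assume c12 < 0, c21 > 0, χ12 < 0, χ21 > 0, c12 + c21 > 0 and χ12 + χ21 > 0 (Condition B4). Then the quadruple v11(x) = K₂·x^γ + χ12 − c12, v12(x) = K₂·x^γ − c12, v21(x) = K₂·x^γ + χ12, v22(x) = K₂·x^γ solves the QVI system at every x > 0. -/

import Mathlib

/-- Generator of a one-dimensional geometric Brownian motion with drift `b` and
volatility `σ`: `(L v)(x) = (1/2)σ²x²v''(x) + b x v'(x)`. -/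
noncomputable def Lop (b σ : ℝ) (v : ℝ → ℝ) (x : ℝ) : ℝ :=
  (1/2) * σ^2 * x^2 * deriv (deriv v) x + b * x * deriv v x

/-- The quadruple `(v11, v12, v21, v22)` solves the Isaacs system of
quasi-variational inequalities at the point `x`, with profit `f(x) = x^γ`. -/
def solvesQVI (r γ c12 c21 χ12 χ21 b11 σ11 b12 σ12 b21 σ21 b22 σ22 : ℝ)
    (v11 v12 v21 v22 : ℝ → ℝ) (x : ℝ) : Prop :=
  max (min (r * v11 x - Lop b11 σ11 v11 x - x ^ γ) (v11 x - (v21 x - c12)))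
      (v11 x - (v12 x + χ12)) = 0 ∧
  max (min (r * v12 x - Lop b12 σ12 v12 x - x ^ γ) (v12 x - (v22 x - c12)))
      (v12 x - (v11 x + χ21)) = 0 ∧
  max (min (r * v21 x - Lop b21 σ21 v21 x - x ^ γ) (v21 x - (v11 x - c21)))
      (v21 x - (v22 x + χ12)) = 0 ∧
  max (min (r * v22 x - Lop b22 σ22 v22 x - x ^ γ) (v22 x - (v12 x - c21)))
      (v22 x - (v21 x + χ21)) = 0


/-! Applied to `K y^γ + c`, the operator `r - L` gives `K D x^γ + r c`, where
`D = r - bγ + σ²γ(1-γ)/2`. All four candidates are `K₂ x^γ` plus constants, so each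
continuation residual is `(K₂ D - 1) x^γ + r c`: the factor `K₂ D - 1` vanishes in the dynamics
of the second regime and is negative in those of the first (`K₂ D₁ < K₁ D₁ = 1`). The switching
obstacles are differences of constants, whose signs Condition B4 fixes. -/

open Real

theorem Lop_const_mul_rpow_add (b σ K c γ : ℝ) {x : ℝ} (hx : x ≠ 0) :
    Lop b σ (fun y => K * y ^ γ + c) x = K * ((1/2) * σ^2 * γ * (γ-1) + b * γ) * x ^ γ := by
  have hderiv : ∀ y : ℝ, y ≠ 0 →
      HasDerivAt (fun z : ℝ => K * z ^ γ + c) (K * (γ * y ^ (γ-1))) y := fun y hy =>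
    ((hasDerivAt_rpow_const (p := γ) (Or.inl hy)).const_mul K).add_const c
  have hderiv' : HasDerivAt (fun y : ℝ => K * (γ * y ^ (γ-1)))
      (K * (γ * ((γ-1) * x ^ (γ-1-1)))) x :=
    ((hasDerivAt_rpow_const (p := γ-1) (Or.inl hx)).const_mul γ).const_mul K
  have hderiv_eventually : deriv (fun z : ℝ => K * z ^ γ + c) =ᶠ[nhds x]
      fun y => K * (γ * y ^ (γ-1)) := by
    filter_upwards [eventually_ne_nhds hx] with y hy using (hderiv y hy).deriv
  rw [Lop, (hderiv x hx).deriv, hderiv_eventually.deriv_eq, hderiv'.deriv]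
  have h₁ : x ^ (γ-1-1) * x = x ^ (γ-1) := by rw [← rpow_add_one hx]; norm_num
  have h₂ : x ^ (γ-1) * x = x ^ γ := by rw [← rpow_add_one hx]; norm_num
  linear_combination ((1/2)*σ^2*K*γ*(γ-1)*x) * h₁ + ((1/2)*σ^2*γ*(γ-1)*K + b*K*γ) * h₂

theorem Lop_residual (r b σ K c γ : ℝ) {v : ℝ → ℝ}
    (hv : ∀ y, v y = K * y ^ γ + c) {x : ℝ} (hx : x ≠ 0) :
    r * v x - Lop b σ v x - x ^ γ
      = (K * (r - b*γ + (1/2)*σ^2*γ*(1-γ)) - 1) * x ^ γ + r * c := by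
  obtain rfl : v = fun y => K * y ^ γ + c := funext hv
  rw [Lop_const_mul_rpow_add b σ K c γ hx]
  ring

theorem thm4_5_B4_general
    (r γ c12 c21 χ12 χ21 : ℝ)
    (b11 σ11 b12 σ12 b21 σ21 b22 σ22 : ℝ)
    (K11 K12 : ℝ)
    (hr : 0 < r)
    (hd11 : 0 < r - b11*γ + (1/2)*σ11^2*γ*(1-γ))
    (hd12 : 0 < r - b12*γ + (1/2)*σ12^2*γ*(1-γ))
    (hK11 : K11 = 1/(r - b11*γ + (1/2)*σ11^2*γ*(1-γ)))
    (hK12 : K12 = 1/(r - b12*γ + (1/2)*σ12^2*γ*(1-γ)))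
    (heqb21 : b21 = b11) (heqσ21 : σ21 = σ11)
    (heqb22 : b22 = b12) (heqσ22 : σ22 = σ12)
    (K₁ K₂ : ℝ) (hK₁ : K₁ = K11) (hK₂ : K₂ = K12)
    (hKgt : K₂ < K₁)
    (hc12 : c12 < 0) (hχ12 : χ12 < 0)
    (hcsum : 0 < c12 + c21) (hχsum : 0 < χ12 + χ21)
    :
    ∀ x : ℝ, 0 < x →
      solvesQVI r γ c12 c21 χ12 χ21 b11 σ11 b12 σ12 b21 σ21 b22 σ22
        (fun y => K₂ * y ^ γ + χ12 - c12)
        (fun y => K₂ * y ^ γ - c12)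
        (fun y => K₂ * y ^ γ + χ12)
        (fun y => K₂ * y ^ γ) x := by
  intro x hx
  subst b21 σ21 b22 σ22
  have hK₂D₂ : K₂ * (r - b12*γ + (1/2)*σ12^2*γ*(1-γ)) = 1 := by
    rw [hK₂, hK12, one_div, inv_mul_cancel₀ hd12.ne']
  have hK₂D₁ : K₂ * (r - b11*γ + (1/2)*σ11^2*γ*(1-γ)) < 1 :=
    calc _ < K₁ * (r - b11*γ + (1/2)*σ11^2*γ*(1-γ)) := mul_lt_mul_of_pos_right hKgt hd11
      _ = 1 := by rw [hK₁, hK11, one_div, inv_mul_cancel₀ hd11.ne']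
  have hres₂₁ : (K₂ * (r - b11*γ + (1/2)*σ11^2*γ*(1-γ)) - 1) * x ^ γ + r * χ12 < 0 := by
    nlinarith [rpow_pos_of_pos hx γ, mul_neg_of_pos_of_neg hr hχ12]
  dsimp only [solvesQVI]
  refine ⟨?_, ?_, ?_, ?_⟩
  · -- both switching obstacles are active at `v11`
    rw [sub_self, sub_add_eq_add_sub, sub_self]
    exact max_eq_right (min_le_right _ _)
  · rw [Lop_residual r b12 σ12 K₂ (-c12) γ (fun _ => sub_eq_add_neg _ _) hx.ne', hK₂D₂,
      sub_self, zero_mul, zero_add, sub_self, min_eq_right (mul_pos hr (neg_pos.mpr hc12)).le]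
    exact max_eq_left (by linarith)
  · rw [Lop_residual r b11 σ11 K₂ χ12 γ (fun _ => rfl) hx.ne', sub_self,
      min_eq_left (by linarith)]
    exact max_eq_right hres₂₁.le
  · rw [Lop_residual r b12 σ12 K₂ 0 γ (fun _ => (add_zero _).symm) hx.ne', hK₂D₂,
      sub_self, zero_mul, mul_zero, add_zero, min_eq_left (by linarith)]
    exact max_eq_left (by linarith)

theorem thm4_5_B4
    (r γ c12 c21 χ12 χ21 : ℝ)
    (b11 σ11 b12 σ12 b21 σ21 b22 σ22 : ℝ)
    (K11 K12 K21 K22 : ℝ)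
    (hr : 0 < r) (hγ0 : 0 < γ) (hγ1 : γ < 1)
    (hσ11 : 0 < σ11) (hσ12 : 0 < σ12) (hσ21 : 0 < σ21) (hσ22 : 0 < σ22)
    (hd11 : 0 < r - b11*γ + (1/2)*σ11^2*γ*(1-γ))
    (hd12 : 0 < r - b12*γ + (1/2)*σ12^2*γ*(1-γ))
    (hd21 : 0 < r - b21*γ + (1/2)*σ21^2*γ*(1-γ))
    (hd22 : 0 < r - b22*γ + (1/2)*σ22^2*γ*(1-γ))
    (hrb11 : b11 < r) (hrb12 : b12 < r) (hrb21 : b21 < r) (hrb22 : b22 < r)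
    (hK11 : K11 = 1/(r - b11*γ + (1/2)*σ11^2*γ*(1-γ)))
    (hK12 : K12 = 1/(r - b12*γ + (1/2)*σ12^2*γ*(1-γ)))
    (hK21 : K21 = 1/(r - b21*γ + (1/2)*σ21^2*γ*(1-γ)))
    (hK22 : K22 = 1/(r - b22*γ + (1/2)*σ22^2*γ*(1-γ)))
    (heqb21 : b21 = b11) (heqσ21 : σ21 = σ11)
    (heqb22 : b22 = b12) (heqσ22 : σ22 = σ12)
    (K₁ K₂ : ℝ) (hK₁ : K₁ = K11) (hK₂ : K₂ = K12)
    (hKgt : K₂ < K₁)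
    (hc12 : c12 < 0) (hc21 : 0 < c21) (hχ12 : χ12 < 0) (hχ21 : 0 < χ21)
    (hcsum : 0 < c12 + c21) (hχsum : 0 < χ12 + χ21)
    :
    ∀ x : ℝ, 0 < x →
      solvesQVI r γ c12 c21 χ12 χ21 b11 σ11 b12 σ12 b21 σ21 b22 σ22
        (fun y => K₂ * y ^ γ + χ12 - c12)
        (fun y => K₂ * y ^ γ - c12)
        (fun y => K₂ * y ^ γ + χ12)
        (fun y => K₂ * y ^ γ) x :=
  thm4_5_B4_general r γ c12 c21 χ12 χ21 b11 σ11 b12 σ12 b21 σ21 b22 σ22 K11 K12 hr hd11 hd12 hK11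
    hK12 heqb21 heqσ21 heqb22 heqσ22 K₁ K₂ hK₁ hK₂ hKgt hc12 hχ12 hcsum hχsum
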